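/- Let k be a field, V a nonzero k-vector space, and R a subring of End_k(V) (containing the identity) that is triangular with respect to a well-ordered basis (B, ≤) of V. Then TNil(R), the set of topologically nilpotent elements of R, is a topologically nilpotent set. -/

import Mathlib

variable {k : Type*} [Field k]

/-- `seqProd f n = f (n-1) * ⋯ * f 1 * f 0`, the composition `Tₙ ⋯ T₂ T₁` of the first `n`
terms of the sequence `f` (and the identity for `n = 0`). -/
def seqProd {V : Type*} [AddCommGroup V] [Module k V]
    (f : ℕ → Module.End k V) : ℕ → Module.End k V
  | 0 => 1
  | n + 1 => f n * seqProd f n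

/-- A subset `X ⊆ End_k(V)` is topologically nilpotent if for every sequence of elements of
`X` and every finite-dimensional subspace `W` of `V`, some initial composition
`Tₙ ⋯ T₂ T₁` annihilates `W`. -/
def IsTopNilpotentSet {V : Type*} [AddCommGroup V] [Module k V]
    (X : Set (Module.End k V)) : Prop :=
  ∀ f : ℕ → Module.End k V, (∀ n, f n ∈ X) →
    ∀ W : Submodule k V, FiniteDimensional k ↥W →
      ∃ n : ℕ, 0 < n ∧ ∀ w ∈ W, seqProd f n w = 0

/-!
The `i`-th coordinate of `T^m (b i)` is the `m`-th power of the diagonal entry of the triangular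
map `T` at `i`, so a topologically nilpotent triangular map has zero diagonal, i.e. it is strictly
triangular. For a sequence of strictly triangular maps, well-founded induction on `i` shows that
`b i` is eventually killed: the first map sends `b i` into the span of smaller basis vectors,
which the tail of the sequence eventually kills. A finite-dimensional subspace involves only
finitely many basis vectors.
-/

section SeqProd

open Filter Submodule

variable {V : Type*} [AddCommGroup V] [Module k V]

theorem seqProd_succ' (f : ℕ → Module.End k V) (n : ℕ) :
    seqProd f (n + 1) = seqProd (fun m => f (m + 1)) n * f 0 := by
  induction n with
  | zero => simp [seqProd]
  | succ n ih => rw [seqProd, ih, seqProd, mul_assoc]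

def eventualKer (f : ℕ → Module.End k V) : Submodule k V where
  carrier := {x | ∀ᶠ n in atTop, seqProd f n x = 0}
  zero_mem' := by simp
  add_mem' hx hy := (hx.and hy).mono fun n h => by simp [h.1, h.2]
  smul_mem' c _ hx := hx.mono fun n h => by simp [h]

theorem apply_mem_eventualKer_tail {f : ℕ → Module.End k V} {x : V}
    (hx : f 0 x ∈ eventualKer (fun m => f (m + 1))) : x ∈ eventualKer f := by
  change ∀ᶠ n in atTop, seqProd f n x = 0
  rw [← map_add_atTop_eq_nat 1, eventually_map]
  exact hx.mono fun n h => by rwa [seqProd_succ']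

theorem isTopNilpotentSet_of_eventualKer_eq_top {X : Set (Module.End k V)}
    (hX : ∀ f : ℕ → Module.End k V, (∀ n, f n ∈ X) → eventualKer f = ⊤) :
    IsTopNilpotentSet X := by
  intro f hf W hW
  obtain ⟨S, rfl⟩ := (fg_iff_finiteDimensional W).mpr hW
  have hS : ∀ᶠ n in atTop, ∀ x ∈ S, seqProd f n x = 0 :=
    (eventually_all_finset S).2 fun x _ => (hX f hf).ge (mem_top : x ∈ ⊤)
  obtain ⟨n, hn, hnS⟩ := ((eventually_gt_atTop 0).and hS).exists
  refine ⟨n, hn, fun w hw => ?_⟩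
  have hle : span k (S : Set V) ≤ LinearMap.ker (seqProd f n) := span_le.2 hnS
  exact hle hw

end SeqProd

section Triangular

open Set Submodule

variable {V : Type*} [AddCommGroup V] [Module k V]
variable {ι : Type*} [PartialOrder ι] (b : Module.Basis ι k V)

def IsTriangular (T : Module.End k V) : Prop :=
  ∀ i, T (b i) ∈ span k (b '' Iic i)

def IsStrictlyTriangular (T : Module.End k V) : Prop :=
  ∀ i, T (b i) ∈ span k (b '' Iio i)

variable {b}

theorem IsTriangular.span_Iic_le_comap {T : Module.End k V} (hT : IsTriangular b T) (i : ι) :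
    span k (b '' Iic i) ≤ (span k (b '' Iic i)).comap T := by
  rw [span_le]
  rintro _ ⟨j, hj, rfl⟩
  exact span_mono (image_mono (Iic_subset_Iic.2 hj)) (hT j)

theorem IsTriangular.one : IsTriangular b 1 :=
  fun i => subset_span ⟨i, self_mem_Iic, rfl⟩

theorem IsTriangular.mul {S T : Module.End k V} (hS : IsTriangular b S)
    (hT : IsTriangular b T) : IsTriangular b (S * T) :=
  fun i => hS.span_Iic_le_comap i (hT i)

theorem IsTriangular.pow {T : Module.End k V} (hT : IsTriangular b T) (m : ℕ) :
    IsTriangular b (T ^ m) := by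
  induction m with
  | zero => exact pow_zero T ▸ IsTriangular.one
  | succ m ih => exact pow_succ T m ▸ ih.mul hT

theorem IsTriangular.coord_apply {T : Module.End k V} (hT : IsTriangular b T) (i : ι)
    {x : V} (hx : x ∈ span k (b '' Iic i)) :
    b.coord i (T x) = b.coord i (T (b i)) * b.coord i x := by
  induction hx using span_induction with
  | mem _ hy =>
    obtain ⟨j, hj, rfl⟩ := hy
    rcases hj.eq_or_lt with rfl | hji
    · simp
    · have hTj : i ∉ (b.repr (T (b j))).support := fun h =>
        hji.not_ge (b.mem_span_image.1 (hT j) h)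
      simp [Finsupp.notMem_support_iff.1 hTj, Finsupp.single_eq_of_ne hji.ne']
  | zero => simp
  | add x y _ _ hx hy => rw [map_add, map_add, hx, hy, map_add, mul_add]
  | smul c x _ hx =>
    rw [map_smul, map_smul, map_smul, hx, smul_eq_mul, smul_eq_mul, mul_left_comm]

theorem IsTriangular.coord_pow_apply_self {T : Module.End k V} (hT : IsTriangular b T)
    (i : ι) (m : ℕ) : b.coord i ((T ^ m) (b i)) = b.coord i (T (b i)) ^ m := by
  induction m with
  | zero => simp
  | succ m ih => rw [pow_succ', Module.End.mul_apply, hT.coord_apply i (hT.pow m i), ih, pow_succ']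

theorem mem_span_Iio_of_coord_eq_zero {i : ι} {x : V} (hx : x ∈ span k (b '' Iic i))
    (hi : b.coord i x = 0) : x ∈ span k (b '' Iio i) := by
  rw [b.mem_span_image] at hx ⊢
  intro j hj
  exact lt_of_le_of_ne (hx hj) (by rintro rfl; exact Finsupp.mem_support_iff.1 hj hi)

theorem IsTriangular.isStrictlyTriangular {T : Module.End k V} (hT : IsTriangular b T)
    (hnil : ∀ i, ∃ m, (T ^ m) (b i) = 0) : IsStrictlyTriangular b T := by
  intro i
  obtain ⟨m, hm⟩ := hnil i
  have hdiag : b.coord i (T (b i)) ^ m = 0 := by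
    rw [← hT.coord_pow_apply_self, hm, map_zero]
  exact mem_span_Iio_of_coord_eq_zero (hT i) (eq_zero_of_pow_eq_zero hdiag)

theorem eventualKer_eq_top_of_isStrictlyTriangular [WellFoundedLT ι]
    {f : ℕ → Module.End k V} (hf : ∀ n, IsStrictlyTriangular b (f n)) :
    eventualKer f = ⊤ := by
  suffices ∀ i, ∀ g : ℕ → Module.End k V, (∀ n, IsStrictlyTriangular b (g n)) →
      b i ∈ eventualKer g by
    rw [eq_top_iff, ← b.span_eq, span_le]
    rintro _ ⟨i, rfl⟩
    exact this i f hf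
  intro i
  induction i using WellFoundedLT.induction with
  | ind i ih =>
    intro g hg
    have hle : span k (b '' Iio i) ≤ eventualKer (fun m => g (m + 1)) := by
      rw [span_le]
      rintro _ ⟨j, hj, rfl⟩
      exact ih j hj _ fun n => hg (n + 1)
    exact apply_mem_eventualKer_tail (hle (hg 0 i))

end Triangular

theorem stmt_10_general {V : Type*} [AddCommGroup V] [Module k V]
    (R : Subring (Module.End k V))
    {ι : Type*} [LinearOrder ι] [WellFoundedLT ι] (b : Module.Basis ι k V)
    (htri : ∀ T ∈ R, ∀ i : ι, T (b i) ∈ Submodule.span k (⇑b '' {j | j ≤ i})) :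
    IsTopNilpotentSet
      {T : Module.End k V | T ∈ R ∧ ∀ v : V, ∃ m : ℕ, 0 < m ∧ (T ^ m) v = 0} := by
  refine isTopNilpotentSet_of_eventualKer_eq_top fun f hf => ?_
  refine eventualKer_eq_top_of_isStrictlyTriangular (b := b) fun n => ?_
  obtain ⟨hR, hnil⟩ := hf n
  refine IsTriangular.isStrictlyTriangular (htri _ hR) fun i => ?_
  obtain ⟨m, -, hm⟩ := hnil (b i)
  exact ⟨m, hm⟩

/-- if `R` is a unital subring of `End_k(V)` triangular with respect to a
well-ordered basis `(B, ≤)`, then `TNil(R)`, the set of topologically nilpotent elements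
of `R`, is a topologically nilpotent set. -/
theorem stmt_10 {V : Type*} [AddCommGroup V] [Module k V] [Nontrivial V]
    (R : Subring (Module.End k V))
    {ι : Type*} [LinearOrder ι] [WellFoundedLT ι] (b : Module.Basis ι k V)
    (htri : ∀ T ∈ R, ∀ i : ι, T (b i) ∈ Submodule.span k (⇑b '' {j | j ≤ i})) :
    IsTopNilpotentSet
      {T : Module.End k V | T ∈ R ∧ ∀ v : V, ∃ m : ℕ, 0 < m ∧ (T ^ m) v = 0} :=
  stmt_10_general R b htri
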